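/- arXiv:1708.08591 — 2 statements merged into one kernel-verified Lean document; each statement's English description precedes it below -/
import Mathlib

section
/- Let N, G, l be natural numbers, let α, β, γ, δ be nonnegative reals, let K^m ∈ Matrix (Fin N) (Fin G) ℝ and K^c ∈ Matrix (Fin N) (Fin N) ℝ have all entries nonnegative, let Y^o ∈ Matrix (Fin N) (Fin l) ℝ, Y^g ∈ Matrix (Fin G) (Fin l) ℝ, and define P(F^o, F^g) = (α/2) ∑_{i,j} K^m_{ij} ‖F^o_{i·} − F^g_{j·}‖² + (β/2) ∑_{i,j} K^c_{ij} ‖F^o_{i·} − F^o_{j·}‖² + γ ∑_i ‖F^o_{i·} − Y^o_{i·}‖² + δ ∑_j ‖F^g_{j·} − Y^g_{j·}‖². Fix F^o, and assume that for every j < G we have α ∑_i K^m_{ij} + 2δ > 0. Then the function F^g ↦ P(F^o, F^g) is strictly convex on Matrix (Fin G) (Fin l) ℝ. -/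
open scoped BigOperators

/-! With `F^o` fixed, `P` is a quadratic function of `F^g` with quadratic part
`D ↦ ∑ⱼ (α/2 ∑ᵢ K^m_{ij} + δ) ‖D_{j·}‖²`. For a quadratic function the Jensen inequality is an
identity, `f (a x + b y) = a f x + b f y - a b Q (x - y)` when `a + b = 1`, so strict convexity
amounts to `Q` being positive off `0`, i.e. to every row weight `α/2 ∑ᵢ K^m_{ij} + δ` being
positive. -/

/-- Squared Euclidean norm of a vector in `ℝ^l`. -/
noncomputable def esqnorm {l : ℕ} (v : Fin l → ℝ) : ℝ :=
  ‖(WithLp.equiv 2 (Fin l → ℝ)).symm v‖ ^ 2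

/-- The ensemble objective `P(F^o, F^g)` of problem (6) of the paper. -/
noncomputable def objP (N G l : ℕ) (α β γ δ : ℝ)
    (Km : Matrix (Fin N) (Fin G) ℝ) (Kc : Matrix (Fin N) (Fin N) ℝ)
    (Yo : Matrix (Fin N) (Fin l) ℝ) (Yg : Matrix (Fin G) (Fin l) ℝ)
    (Fo : Matrix (Fin N) (Fin l) ℝ) (Fg : Matrix (Fin G) (Fin l) ℝ) : ℝ :=
  α / 2 * ∑ i, ∑ j, Km i j * esqnorm (Fo i - Fg j)
  + β / 2 * ∑ i, ∑ j, Kc i j * esqnorm (Fo i - Fo j)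
  + γ * ∑ i, esqnorm (Fo i - Yo i)
  + δ * ∑ j, esqnorm (Fg j - Yg j)

def HasJensenGap {E : Type*} [AddCommGroup E] [Module ℝ E] (f q : E → ℝ) : Prop :=
  ∀ (x y : E) (a b : ℝ), a + b = 1 → f (a • x + b • y) = a * f x + b * f y - a * b * q (x - y)

namespace HasJensenGap

variable {E F : Type*} [AddCommGroup E] [Module ℝ E] [AddCommGroup F] [Module ℝ F]
  {f g q r : E → ℝ}

theorem congr {f' q' : E → ℝ} (h : HasJensenGap f q) (hf : ∀ x, f x = f' x)
    (hq : ∀ z, q z = q' z) : HasJensenGap f' q' := by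
  intro x y a b hab
  simpa only [hf, hq] using h x y a b hab

theorem const (c : ℝ) : HasJensenGap (fun _ : E => c) (fun _ => 0) := by
  intro x y a b hab
  linear_combination (-c) * hab

theorem add (hf : HasJensenGap f q) (hg : HasJensenGap g r) :
    HasJensenGap (fun x => f x + g x) (fun z => q z + r z) := by
  intro x y a b hab
  beta_reduce
  rw [hf x y a b hab, hg x y a b hab]
  ring

theorem const_mul (hf : HasJensenGap f q) (c : ℝ) :
    HasJensenGap (fun x => c * f x) (fun z => c * q z) := by
  intro x y a b hab
  beta_reduce
  rw [hf x y a b hab]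
  ring

theorem sum {ι : Type*} (s : Finset ι) {f q : ι → E → ℝ} (h : ∀ i ∈ s, HasJensenGap (f i) (q i)) :
    HasJensenGap (fun x => ∑ i ∈ s, f i x) (fun z => ∑ i ∈ s, q i z) := by
  intro x y a b hab
  simp only [Finset.mul_sum, ← Finset.sum_add_distrib, ← Finset.sum_sub_distrib]
  exact Finset.sum_congr rfl fun i hi => h i hi x y a b hab

theorem comp_linearMap (hf : HasJensenGap f q) (L : F →ₗ[ℝ] E) :
    HasJensenGap (f ∘ L) (q ∘ L) := by
  intro x y a b hab
  simpa only [Function.comp_apply, map_add, map_smul, map_sub] using hf (L x) (L y) a b hab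

theorem comp_sub_const (hf : HasJensenGap f q) (c : E) :
    HasJensenGap (fun x => f (x - c)) q := by
  intro x y a b hab
  have hc : a • x + b • y - c = a • (x - c) + b • (y - c) := by
    linear_combination (norm := module) hab • c
  beta_reduce
  rw [hc, hf _ _ a b hab, sub_sub_sub_cancel_right]

theorem strictConvexOn (hf : HasJensenGap f q) (hq : ∀ z ≠ 0, 0 < q z) {s : Set E}
    (hs : Convex ℝ s) : StrictConvexOn ℝ s f := by
  refine ⟨hs, fun x _ y _ hxy a b ha hb hab => ?_⟩
  have hgap : 0 < a * b * q (x - y) := mul_pos (mul_pos ha hb) (hq _ (sub_ne_zero.2 hxy))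
  rw [hf x y a b hab, smul_eq_mul, smul_eq_mul]
  linarith

end HasJensenGap

theorem hasJensenGap_norm_sq {E : Type*} [NormedAddCommGroup E] [InnerProductSpace ℝ E] :
    HasJensenGap (fun x : E => ‖x‖ ^ 2) (fun z => ‖z‖ ^ 2) := by
  intro x y a b hab
  obtain rfl := eq_sub_of_add_eq hab
  beta_reduce
  rw [norm_add_sq_real, norm_sub_sq_real, norm_smul, norm_smul, real_inner_smul_left,
    real_inner_smul_right, mul_pow, mul_pow, Real.norm_eq_abs, Real.norm_eq_abs, sq_abs, sq_abs]
  ring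

theorem hasJensenGap_esqnorm {l : ℕ} : HasJensenGap (esqnorm (l := l)) esqnorm :=
  (hasJensenGap_norm_sq.comp_linearMap (WithLp.linearEquiv 2 ℝ (Fin l → ℝ)).symm.toLinearMap).congr
    (fun _ => rfl) fun _ => rfl

theorem esqnorm_sub_comm {l : ℕ} (u v : Fin l → ℝ) : esqnorm (u - v) = esqnorm (v - u) := by
  simp only [esqnorm, WithLp.equiv_symm_apply, WithLp.toLp_sub, norm_sub_rev]

theorem esqnorm_pos {l : ℕ} {v : Fin l → ℝ} (hv : v ≠ 0) : 0 < esqnorm v := by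
  have : (WithLp.equiv 2 (Fin l → ℝ)).symm v ≠ 0 := by simpa using hv
  exact pow_pos (norm_pos_iff.2 this) 2

theorem sum_mul_esqnorm_pos {ι : Type*} [Fintype ι] {l : ℕ} {w : ι → ℝ} (hw : ∀ j, 0 < w j)
    {D : ι → Fin l → ℝ} (hD : D ≠ 0) : 0 < ∑ j, w j * esqnorm (D j) := by
  obtain ⟨j, hj⟩ := Function.ne_iff.1 hD
  refine Finset.sum_pos' (fun i _ => mul_nonneg (hw i).le (by unfold esqnorm; positivity))
    ⟨j, Finset.mem_univ j, mul_pos (hw j) (esqnorm_pos hj)⟩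

theorem hasJensenGap_esqnorm_row_sub {G l : ℕ} (j : Fin G) (c : Fin l → ℝ) :
    HasJensenGap (fun F : Matrix (Fin G) (Fin l) ℝ => esqnorm (F j - c))
      (fun D => esqnorm (D j)) :=
  fun x y a b hab => hasJensenGap_esqnorm.comp_sub_const c (x j) (y j) a b hab

theorem hasJensenGap_objP_group_block (N G l : ℕ) (α β γ δ : ℝ)
    (Km : Matrix (Fin N) (Fin G) ℝ) (Kc : Matrix (Fin N) (Fin N) ℝ)
    (Yo : Matrix (Fin N) (Fin l) ℝ) (Yg : Matrix (Fin G) (Fin l) ℝ)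
    (Fo : Matrix (Fin N) (Fin l) ℝ) :
    HasJensenGap (fun Fg => objP N G l α β γ δ Km Kc Yo Yg Fo Fg)
      (fun D : Matrix (Fin G) (Fin l) ℝ => ∑ j, (α / 2 * ∑ i, Km i j + δ) * esqnorm (D j)) := by
  have hmatch : HasJensenGap
      (fun Fg : Matrix (Fin G) (Fin l) ℝ => α / 2 * ∑ i, ∑ j, Km i j * esqnorm (Fo i - Fg j))
      (fun D : Matrix (Fin G) (Fin l) ℝ => α / 2 * ∑ i, ∑ j, Km i j * esqnorm (D j)) :=
    (HasJensenGap.sum _ fun i _ => HasJensenGap.sum _ fun j _ =>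
      ((hasJensenGap_esqnorm_row_sub j (Fo i)).congr (fun _ => esqnorm_sub_comm _ _)
        fun _ => rfl).const_mul _).const_mul _
  have hfit : HasJensenGap (fun Fg : Matrix (Fin G) (Fin l) ℝ => δ * ∑ j, esqnorm (Fg j - Yg j))
      (fun D : Matrix (Fin G) (Fin l) ℝ => δ * ∑ j, esqnorm (D j)) :=
    (HasJensenGap.sum _ fun j _ => hasJensenGap_esqnorm_row_sub j (Yg j)).const_mul δ
  refine (((hmatch.add (.const _)).add (.const _)).add hfit).congr (fun _ => rfl) fun D => ?_
  simp only [add_zero, add_mul, Finset.sum_add_distrib, mul_assoc,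
    Finset.mul_sum, Finset.sum_mul]
  rw [Finset.sum_comm]

theorem objP_strictConvexOn_group_block_general (N G l : ℕ) (α β γ δ : ℝ)
    (Km : Matrix (Fin N) (Fin G) ℝ) (Kc : Matrix (Fin N) (Fin N) ℝ)
    (Yo : Matrix (Fin N) (Fin l) ℝ) (Yg : Matrix (Fin G) (Fin l) ℝ)
    (Fo : Matrix (Fin N) (Fin l) ℝ)
    (hden : ∀ j : Fin G, 0 < α * (∑ i, Km i j) + 2 * δ) :
    StrictConvexOn ℝ (Set.univ : Set (Matrix (Fin G) (Fin l) ℝ))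
      (fun Fg : Matrix (Fin G) (Fin l) ℝ => objP N G l α β γ δ Km Kc Yo Yg Fo Fg) :=
  (hasJensenGap_objP_group_block N G l α β γ δ Km Kc Yo Yg Fo).strictConvexOn
    (fun _ hD => sum_mul_esqnorm_pos (fun j => by linarith [hden j]) hD) convex_univ

/-- First half of Theorem 3 of the paper: with the object block `F^o` held
fixed, the objective as a function of the group block `F^g` is strictly
convex, provided `α ∑_i K^m_{ij} + 2δ > 0` for every group `j`. -/
theorem objP_strictConvexOn_group_block (N G l : ℕ) (α β γ δ : ℝ)
    (hα : 0 ≤ α) (hβ : 0 ≤ β) (hγ : 0 ≤ γ) (hδ : 0 ≤ δ)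
    (Km : Matrix (Fin N) (Fin G) ℝ) (Kc : Matrix (Fin N) (Fin N) ℝ)
    (hKm : ∀ i j, 0 ≤ Km i j) (hKc : ∀ i j, 0 ≤ Kc i j)
    (Yo : Matrix (Fin N) (Fin l) ℝ) (Yg : Matrix (Fin G) (Fin l) ℝ)
    (Fo : Matrix (Fin N) (Fin l) ℝ)
    (hden : ∀ j : Fin G, 0 < α * (∑ i, Km i j) + 2 * δ) :
    StrictConvexOn ℝ (Set.univ : Set (Matrix (Fin G) (Fin l) ℝ))
      (fun Fg : Matrix (Fin G) (Fin l) ℝ => objP N G l α β γ δ Km Kc Yo Yg Fo Fg) :=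
  objP_strictConvexOn_group_block_general N G l α β γ δ Km Kc Yo Yg Fo hden
end

section
/- Let N, G, l be natural numbers and i < N. Let α, β, γ ≥ 0 be reals, let K^m ∈ Matrix (Fin N) (Fin G) ℝ and K^c ∈ Matrix (Fin N) (Fin N) ℝ have all entries nonnegative, and let F^g ∈ Matrix (Fin G) (Fin l) ℝ, F^o ∈ Matrix (Fin N) (Fin l) ℝ and Y^o ∈ Matrix (Fin N) (Fin l) ℝ all have nonnegative entries with every row summing to 1. Assume the denominator d = α ∑_{j<G} K^m_{ij} + β (2 ∑_{j<N} K^c_{ij} − K^c_{ii}) + 2γ is strictly positive. Then the vector u = (α ∑_{j<G} K^m_{ij} • F^g_{j·} + β • (2 ∑_{j<N} K^c_{ij} • F^o_{j·} − K^c_{ii} • F^o_{i·}) + (2γ) • Y^o_{i·}) / d has all entries nonnegative and satisfies ∑_{p<l} u p = 1. -/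
open scoped BigOperators

/-- Object-update half of Theorem 4 of the paper: the updated object row
`u = (α ∑_j K^m_{ij} F^g_{j·} + β (2 ∑_j K^c_{ij} F^o_{j·} - K^c_{ii} F^o_{i·})
+ 2γ Y^o_{i·}) / d` of Equation (11) of Algorithm EC3 remains a probability
vector whenever the rows of `F^g`, `F^o` and `Y^o` are probability vectors and
the denominator `d = α ∑_j K^m_{ij} + β (2 ∑_j K^c_{ij} - K^c_{ii}) + 2γ`
is strictly positive. -/
theorem object_update_preserves_simplex (N G l : ℕ) (i : Fin N) (α β γ : ℝ)
    (hα : 0 ≤ α) (hβ : 0 ≤ β) (hγ : 0 ≤ γ)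
    (Km : Matrix (Fin N) (Fin G) ℝ) (Kc : Matrix (Fin N) (Fin N) ℝ)
    (hKm : ∀ i j, 0 ≤ Km i j) (hKc : ∀ i j, 0 ≤ Kc i j)
    (Fg : Matrix (Fin G) (Fin l) ℝ) (Fo : Matrix (Fin N) (Fin l) ℝ)
    (Yo : Matrix (Fin N) (Fin l) ℝ)
    (hFg : ∀ j p, 0 ≤ Fg j p) (hFgsum : ∀ j, ∑ p, Fg j p = 1)
    (hFo : ∀ j p, 0 ≤ Fo j p) (hFosum : ∀ j, ∑ p, Fo j p = 1)
    (hYo : ∀ j p, 0 ≤ Yo j p) (hYosum : ∀ j, ∑ p, Yo j p = 1)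
    (hd : 0 < α * (∑ j, Km i j) + β * (2 * (∑ j, Kc i j) - Kc i i) + 2 * γ) :
    (∀ p, 0 ≤ ((α * (∑ j, Km i j) + β * (2 * (∑ j, Kc i j) - Kc i i) + 2 * γ)⁻¹ •
        (α • (∑ j, Km i j • Fg j)
          + β • ((2 : ℝ) • (∑ j, Kc i j • Fo j) - Kc i i • Fo i)
          + (2 * γ) • Yo i)) p)
    ∧ ∑ p, ((α * (∑ j, Km i j) + β * (2 * (∑ j, Kc i j) - Kc i i) + 2 * γ)⁻¹ •
        (α • (∑ j, Km i j • Fg j)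
          + β • ((2 : ℝ) • (∑ j, Kc i j • Fo j) - Kc i i • Fo i)
          + (2 * γ) • Yo i)) p = 1 := by
  set d := α * (∑ j, Km i j) + β * (2 * (∑ j, Kc i j) - Kc i i) + 2 * γ with hdef
  have hd0 : d ≠ 0 := ne_of_gt hd
  have hent : ∀ p, ((α • (∑ j, Km i j • Fg j)
          + β • ((2 : ℝ) • (∑ j, Kc i j • Fo j) - Kc i i • Fo i)
          + (2 * γ) • Yo i)) p
      = α * (∑ j, Km i j * Fg j p)
        + β * (2 * (∑ j, Kc i j * Fo j p) - Kc i i * Fo i p)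
        + 2 * γ * Yo i p := by
    intro p
    simp [Finset.sum_apply, mul_assoc, Finset.mul_sum, mul_comm, mul_left_comm]
  constructor
  · intro p
    rw [Pi.smul_apply, hent, smul_eq_mul]
    have h1 : 0 ≤ α * (∑ j, Km i j * Fg j p) :=
      mul_nonneg hα (Finset.sum_nonneg fun j _ => mul_nonneg (hKm i j) (hFg j p))
    have h2 : 0 ≤ 2 * (∑ j, Kc i j * Fo j p) - Kc i i * Fo i p := by
      have hle : Kc i i * Fo i p ≤ ∑ j, Kc i j * Fo j p :=
        Finset.single_le_sum (fun j _ => mul_nonneg (hKc i j) (hFo j p))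
          (Finset.mem_univ i)
      have hs : 0 ≤ ∑ j, Kc i j * Fo j p :=
        Finset.sum_nonneg fun j _ => mul_nonneg (hKc i j) (hFo j p)
      nlinarith
    have h3 : 0 ≤ 2 * γ * Yo i p :=
      mul_nonneg (mul_nonneg (by norm_num) hγ) (hYo i p)
    positivity
  · have : ∑ p, ((α • (∑ j, Km i j • Fg j)
          + β • ((2 : ℝ) • (∑ j, Kc i j • Fo j) - Kc i i • Fo i)
          + (2 * γ) • Yo i)) p = d := by
      simp only [hent]
      rw [Finset.sum_add_distrib, Finset.sum_add_distrib, ← Finset.mul_sum,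
        ← Finset.mul_sum, ← Finset.mul_sum]
      have e1 : ∑ p, ∑ j, Km i j * Fg j p = ∑ j, Km i j := by
        rw [Finset.sum_comm]
        exact Finset.sum_congr rfl fun j _ => by
          rw [← Finset.mul_sum, hFgsum, mul_one]
      have e2 : ∑ p, (2 * (∑ j, Kc i j * Fo j p) - Kc i i * Fo i p)
          = 2 * (∑ j, Kc i j) - Kc i i := by
        rw [Finset.sum_sub_distrib, ← Finset.mul_sum, ← Finset.mul_sum,
          Finset.sum_comm]
        have : ∑ j, ∑ p, Kc i j * Fo j p = ∑ j, Kc i j :=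
          Finset.sum_congr rfl fun j _ => by
            rw [← Finset.mul_sum, hFosum, mul_one]
        rw [this, hFosum, mul_one]
      rw [e1, e2, hYosum, mul_one, hdef]
    simp only [Pi.smul_apply, smul_eq_mul, ← Finset.mul_sum, this]
    field_simp
end
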